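/- Let G be the incidence graph of a projective plane of order n ≥ 2, and consider the cop-and-drunk game on G with starting vertices u (cop) and v (robber) at graph distance d(u,v) ≥ 2. Then for every cop strategy the expected capture time is at least n + 1 (the degree of regularity of G). In particular, since G has diameter 3, no function of the diameter alone can bound the expected capture time. -/

import Mathlib

open scoped Classical ENNReal

/-- The incidence graph of a point–line incidence structure: the bipartite simple graph on
`P ⊕ L` in which a point is adjacent to a line iff the point lies on the line. -/
def incidenceGraph {P L : Type} (incid : P → L → Prop) : SimpleGraph (P ⊕ L) where
  Adj x y :=
    (∃ p l, x = Sum.inl p ∧ y = Sum.inr l ∧ incid p l) ∨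
      (∃ p l, x = Sum.inr l ∧ y = Sum.inl p ∧ incid p l)
  symm := by
    constructor
    rintro x y (⟨p, l, rfl, rfl, h⟩ | ⟨p, l, rfl, rfl, h⟩)
    · exact Or.inr ⟨p, l, rfl, rfl, h⟩
    · exact Or.inl ⟨p, l, rfl, rfl, h⟩
  loopless := by
    constructor
    rintro x (⟨p, l, rfl, hx, h⟩ | ⟨p, l, rfl, hx, h⟩) <;> simp at hx

/-- The axioms of a projective plane of order `n`, stated for a point type `P`, a line type
`L`, and an incidence relation `incid`:  two distinct points lie on a unique common line,
two distinct lines meet in a unique common point, every line has exactly `n+1` points,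
every point is on exactly `n+1` lines, and there are exactly `n²+n+1` points and
`n²+n+1` lines. -/
structure IsProjectivePlaneOfOrder {P L : Type} (incid : P → L → Prop) (n : ℕ) : Prop where
  exists_unique_line : ∀ p q : P, p ≠ q → ∃! l : L, incid p l ∧ incid q l
  exists_unique_point : ∀ l m : L, l ≠ m → ∃! p : P, incid p l ∧ incid p m
  card_points_on_line : ∀ l : L, Nat.card {p : P // incid p l} = n + 1
  card_lines_through_point : ∀ p : P, Nat.card {l : L // incid p l} = n + 1
  card_points : Nat.card P = n ^ 2 + n + 1
  card_lines : Nat.card L = n ^ 2 + n + 1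

/-! ## The cop-and-drunk game

A cop starts at `u`, a robber at `v`.  In each move the cop steps to an adjacent vertex
(seeing everything), then the robber steps to a uniformly random adjacent vertex.
A cop strategy is a function assigning to each finite history of play (equivalently, to the
finite sequence of robber positions observed so far, which together with the strategy itself
determines the whole history) the cop's next vertex.  Capture occurs the first time the two
players occupy the same vertex, whether after the cop's step or after the robber's step, and
the capture time is the index of that move.  The expected capture time is computed as
`∑_{k≥0} P(T > k)` in `ℝ≥0∞`, where the probability of a robber trajectory is the product of
the transition weights `1/deg` of the simple random walk (so non-walk trajectories get
weight `0`). -/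

/-- The cop's position after move `k`, given strategy `σ`, starting vertex `u`, and the
robber's trajectory `r` (the strategy sees the history `r 0, …, r (k-1)`). -/
def copPos {V : Type} (σ : List V → V) (u : V) (r : ℕ → V) : ℕ → V
  | 0 => u
  | k + 1 => σ (List.ofFn fun i : Fin (k + 1) => r i)

/-- A strategy is valid for `G` if the cop always moves from her current vertex to an
adjacent vertex. -/
def ValidStrategy {V : Type} (G : SimpleGraph V) (σ : List V → V) (u : V) : Prop :=
  ∀ (r : ℕ → V) (k : ℕ), G.Adj (copPos σ u r k) (copPos σ u r (k + 1))

/-- The robber following trajectory `r` has been captured by the end of move `k`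
(including capture at time `0` in case the two players start on the same vertex):
at some move `j ≤ k`, either the cop stepped onto the robber's current vertex, or the
robber stepped onto the cop's vertex. -/
def CapturedBy {V : Type} (σ : List V → V) (u : V) (r : ℕ → V) (k : ℕ) : Prop :=
  r 0 = u ∨ ∃ j, 1 ≤ j ∧ j ≤ k ∧ (copPos σ u r j = r (j - 1) ∨ copPos σ u r j = r j)

/-- Probability weight of the first `k` steps of the trajectory `r` for the simple random
walk on `G`: the product of `1/deg` over the steps, and `0` if some step is not an edge. -/
noncomputable def pathWt {V : Type} [Fintype V] (G : SimpleGraph V) (r : ℕ → V) (k : ℕ) :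
    ℝ≥0∞ :=
  ∏ i ∈ Finset.range k, if G.Adj (r i) (r (i + 1)) then ((G.degree (r i) : ℝ≥0∞))⁻¹ else 0

/-- Extend a finite trajectory to an infinite one (constant after time `k`). -/
def pad {V : Type} (k : ℕ) (q : Fin (k + 1) → V) : ℕ → V :=
  fun i => q ⟨min i k, Nat.lt_succ_of_le (Nat.min_le_right i k)⟩

/-- The probability that the robber, starting at `v` and performing a simple random walk on
`G`, survives (is not yet captured) through the end of move `k`, against the cop playing
strategy `σ` from `u`. -/
noncomputable def survival {V : Type} [Fintype V] (G : SimpleGraph V) (σ : List V → V)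
    (u v : V) (k : ℕ) : ℝ≥0∞ :=
  ∑ q : Fin (k + 1) → V,
    if q 0 = v ∧ ¬ CapturedBy σ u (pad k q) k then pathWt G (pad k q) k else 0

/-- The expected capture time `E[T] = ∑_{k ≥ 0} P(T > k)` of the cop-and-drunk game on `G`,
with the cop starting at `u` playing strategy `σ` and the robber starting at `v`. -/
noncomputable def expCaptureTime {V : Type} [Fintype V] (G : SimpleGraph V) (σ : List V → V)
    (u v : V) : ℝ≥0∞ :=
  ∑' k : ℕ, survival G σ u v k

/-!
While the cop is neither on nor next to the robber, her next step cannot land on him. If the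
graph has no triangles and no `4`-cycles, at most one of the `n + 1` neighbours of the robber
lies on or next to the cop's new vertex, so with probability at least `n / (n + 1)` the robber
steps to a vertex again neither on nor next to the cop. Hence `P(T > k) ≥ (n / (n + 1)) ^ k`
and `E[T] ≥ ∑ₖ (n / (n + 1)) ^ k = n + 1`. The incidence graph of a projective plane of order
`n` is `(n + 1)`-regular of girth `6`.
-/

open Finset

namespace SimpleGraph

variable {V : Type} (G : SimpleGraph V)

def FarApart (a b : V) : Prop := a ≠ b ∧ ¬ G.Adj a b

/-- `w` ranges over the middle vertices of the paths `b – w – a`, and over `a` itself when `a`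
and `b` are adjacent; equivalently, `G` has no triangles and no `4`-cycles. -/
def AtMostOneShortPath : Prop :=
  ∀ a b : V, a ≠ b → {w | G.Adj b w ∧ (w = a ∨ G.Adj a w)}.Subsingleton

variable {G}

lemma farApart_of_two_le_dist {a b : V} (h : 2 ≤ G.dist a b) : G.FarApart a b := by
  refine ⟨?_, fun hab => ?_⟩
  · rintro rfl
    simp at h
  · rw [dist_eq_one_iff_adj.2 hab] at h
    omega

lemma degree_le_card_farApart_neighbors_add_one [Fintype V] (hG : G.AtMostOneShortPath)
    {b c : V} (hcb : c ≠ b) :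
    G.degree b ≤ #{w ∈ G.neighborFinset b | G.FarApart c w} + 1 := by
  have hnear : #{w ∈ G.neighborFinset b | ¬ G.FarApart c w} ≤ 1 := by
    refine Finset.card_le_one.2 fun w₁ h₁ w₂ h₂ => hG c b hcb ?_ ?_ <;>
      simp_all [FarApart, or_iff_not_imp_left, eq_comm]
  rw [← card_neighborFinset_eq_degree,
    ← card_filter_add_card_filter_not (fun w => G.FarApart c w)]
  omega

end SimpleGraph

section Game

variable {V : Type}

lemma copPos_congr (σ : List V → V) (u : V) {r r' : ℕ → V} {k : ℕ}
    (h : ∀ i < k, r i = r' i) {j : ℕ} (hj : j ≤ k) : copPos σ u r j = copPos σ u r' j := by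
  cases j with
  | zero => rfl
  | succ m =>
    simp only [copPos]
    congr 2
    funext i
    exact h i (by omega)

lemma pad_of_le {k : ℕ} (q : Fin (k + 1) → V) {i : ℕ} (h : i ≤ k) :
    pad k q i = q ⟨i, by omega⟩ := by
  simp only [pad, min_eq_left h]

lemma pad_snoc_of_le {k : ℕ} (q : Fin (k + 1) → V) (x : V) {i : ℕ} (hi : i ≤ k) :
    pad (k + 1) (Fin.snoc q x) i = pad k q i := by
  rw [pad_of_le _ (by omega), pad_of_le q hi]
  exact Fin.snoc_castSucc (α := fun _ => V) x q ⟨i, by omega⟩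

lemma pad_snoc_self {k : ℕ} (q : Fin (k + 1) → V) (x : V) :
    pad (k + 1) (Fin.snoc q x) (k + 1) = x := by
  rw [pad_of_le _ le_rfl]
  exact Fin.snoc_last (α := fun _ => V) x q

lemma copPos_pad_snoc (σ : List V → V) (u : V) {k : ℕ} (q : Fin (k + 1) → V) (x : V)
    {j : ℕ} (hj : j ≤ k + 1) :
    copPos σ u (pad (k + 1) (Fin.snoc q x)) j = copPos σ u (pad k q) j :=
  copPos_congr σ u (fun _ hi => pad_snoc_of_le q x (by omega)) hj

lemma pathWt_pad_snoc [Fintype V] (G : SimpleGraph V) {k : ℕ} (q : Fin (k + 1) → V)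
    (x : V) :
    pathWt G (pad (k + 1) (Fin.snoc q x)) (k + 1) =
      pathWt G (pad k q) k *
        if G.Adj (pad k q k) x then ((G.degree (pad k q k) : ℝ≥0∞))⁻¹ else 0 := by
  rw [pathWt, Finset.prod_range_succ, pathWt, pad_snoc_of_le q x le_rfl, pad_snoc_self]
  congr 1
  refine Finset.prod_congr rfl fun i hi => ?_
  rw [Finset.mem_range] at hi
  rw [pad_snoc_of_le q x (by omega), pad_snoc_of_le q x (by omega)]

def StaysFar (G : SimpleGraph V) (σ : List V → V) (u : V) (r : ℕ → V) (k : ℕ) : Prop :=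
  ∀ j ≤ k, G.FarApart (copPos σ u r j) (r j)

lemma staysFar_pad_snoc_iff (G : SimpleGraph V) (σ : List V → V) (u : V) {k : ℕ}
    (q : Fin (k + 1) → V) (x : V) :
    StaysFar G σ u (pad (k + 1) (Fin.snoc q x)) (k + 1) ↔
      StaysFar G σ u (pad k q) k ∧ G.FarApart (copPos σ u (pad k q) (k + 1)) x := by
  constructor
  · intro h
    refine ⟨fun j hj => ?_, ?_⟩
    · simpa only [copPos_pad_snoc σ u q x (by omega : j ≤ k + 1), pad_snoc_of_le q x hj]
        using h j (by omega)
    · simpa only [copPos_pad_snoc σ u q x le_rfl, pad_snoc_self] using h (k + 1) le_rfl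
  · rintro ⟨h, hx⟩ j hj
    rw [copPos_pad_snoc σ u q x hj]
    rcases Nat.lt_or_eq_of_le hj with hj | rfl
    · rw [pad_snoc_of_le q x (by omega)]
      exact h j (by omega)
    · rwa [pad_snoc_self]

lemma not_capturedBy_of_staysFar {G : SimpleGraph V} {σ : List V → V} {u : V}
    (hσ : ValidStrategy G σ u) {r : ℕ → V} {k : ℕ} (h : StaysFar G σ u r k) :
    ¬ CapturedBy σ u r k := by
  rintro (h0 | ⟨j, hj1, hjk, hcap | hcap⟩)
  · exact (h 0 (Nat.zero_le k)).1 h0.symm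
  · obtain ⟨m, rfl⟩ : ∃ m, j = m + 1 := ⟨j - 1, by omega⟩
    have hadj := hσ r m
    rw [hcap, Nat.add_sub_cancel] at hadj
    exact (h m (by omega)).2 hadj
  · exact (h j hjk).1 hcap

end Game

section FarProb

variable {V : Type} [Fintype V] (G : SimpleGraph V) (σ : List V → V) (u v : V)

noncomputable def farWeight (k : ℕ) (q : Fin (k + 1) → V) : ℝ≥0∞ :=
  if q 0 = v ∧ StaysFar G σ u (pad k q) k then pathWt G (pad k q) k else 0

noncomputable def farProb (k : ℕ) : ℝ≥0∞ :=
  ∑ q : Fin (k + 1) → V, farWeight G σ u v k q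

noncomputable def farStepProb (c b : V) : ℝ≥0∞ :=
  ∑ x : V, if G.FarApart c x ∧ G.Adj b x then ((G.degree b : ℝ≥0∞))⁻¹ else 0

variable {G σ u v}

lemma farProb_le_survival (hσ : ValidStrategy G σ u) (k : ℕ) :
    farProb G σ u v k ≤ survival G σ u v k := by
  refine Finset.sum_le_sum fun q _ => ?_
  unfold farWeight
  split_ifs with hfar hsurv
  · exact le_rfl
  · exact absurd ⟨hfar.1, not_capturedBy_of_staysFar hσ hfar.2⟩ hsurv
  · exact zero_le
  · exact le_rfl

lemma farProb_zero (huv : G.FarApart u v) : farProb G σ u v 0 = 1 := by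
  have hstart : ∀ q : Fin 1 → V, q 0 = v ↔ q = fun _ => v := fun q =>
    ⟨fun h => funext fun i => by rw [Subsingleton.elim i 0, h], fun h => by rw [h]⟩
  rw [farProb, Finset.sum_eq_single_of_mem (fun _ => v) (Finset.mem_univ _)]
  · simp [farWeight, StaysFar, pathWt, pad, copPos, huv]
  · intro q _ hq
    simp [farWeight, hstart, hq]

lemma farWeight_snoc {k : ℕ} (q : Fin (k + 1) → V) (x : V) :
    farWeight G σ u v (k + 1) (Fin.snoc q x) =
      farWeight G σ u v k q *
        if G.FarApart (copPos σ u (pad k q) (k + 1)) x ∧ G.Adj (pad k q k) x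
        then ((G.degree (pad k q k) : ℝ≥0∞))⁻¹ else 0 := by
  have h0 : (Fin.snoc q x : Fin (k + 2) → V) 0 = q 0 :=
    Fin.snoc_castSucc (α := fun _ => V) x q 0
  simp only [farWeight, h0, staysFar_pad_snoc_iff, pathWt_pad_snoc]
  split_ifs <;> simp_all

lemma farProb_succ (k : ℕ) :
    farProb G σ u v (k + 1) =
      ∑ q : Fin (k + 1) → V,
        farWeight G σ u v k q * farStepProb G (copPos σ u (pad k q) (k + 1)) (pad k q k) := by
  rw [farProb, ← (Fin.snocEquiv fun _ => V).sum_comp, Fintype.sum_prod_type, Finset.sum_comm]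
  refine Finset.sum_congr rfl fun q _ => ?_
  rw [farStepProb, Finset.mul_sum]
  exact Finset.sum_congr rfl fun x _ => farWeight_snoc q x

end FarProb

section Regular

variable {V : Type} [Fintype V] {G : SimpleGraph V} {n : ℕ}

lemma div_succ_le_farStepProb (hreg : G.IsRegularOfDegree (n + 1))
    (hG : G.AtMostOneShortPath) {b c : V} (hcb : c ≠ b) :
    (n : ℝ≥0∞) / ((n : ℝ≥0∞) + 1) ≤ farStepProb G c b := by
  have hcard : n ≤ #{x | G.FarApart c x ∧ G.Adj b x} := by
    have h := G.degree_le_card_farApart_neighbors_add_one hG hcb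
    have hset : ({w ∈ G.neighborFinset b | G.FarApart c w} : Finset V) =
        ({x | G.FarApart c x ∧ G.Adj b x} : Finset V) := by
      ext; simp [and_comm]
    rw [hreg b, hset] at h
    omega
  calc (n : ℝ≥0∞) / ((n : ℝ≥0∞) + 1) = n * ((n : ℝ≥0∞) + 1)⁻¹ := div_eq_mul_inv _ _
    _ ≤ (#{x | G.FarApart c x ∧ G.Adj b x} : ℝ≥0∞) * ((n : ℝ≥0∞) + 1)⁻¹ := by
      gcongr
    _ = _ := by
      rw [farStepProb, Finset.sum_ite, Finset.sum_const_zero, add_zero, Finset.sum_const,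
        nsmul_eq_mul, hreg b]
      push_cast
      congr

variable {σ : List V → V} {u v : V}

lemma div_succ_mul_farProb_le_farProb_succ (hreg : G.IsRegularOfDegree (n + 1))
    (hG : G.AtMostOneShortPath) (hσ : ValidStrategy G σ u) (k : ℕ) :
    (n : ℝ≥0∞) / ((n : ℝ≥0∞) + 1) * farProb G σ u v k ≤ farProb G σ u v (k + 1) := by
  rw [farProb_succ, farProb, Finset.mul_sum]
  refine Finset.sum_le_sum fun q _ => ?_
  rw [mul_comm]
  by_cases hq : q 0 = v ∧ StaysFar G σ u (pad k q) k
  · have hcop : copPos σ u (pad k q) (k + 1) ≠ pad k q k := fun h =>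
      (hq.2 k le_rfl).2 (h ▸ hσ (pad k q) k)
    gcongr
    exact div_succ_le_farStepProb hreg hG hcop
  · simp [farWeight, hq]

lemma pow_le_farProb (hreg : G.IsRegularOfDegree (n + 1)) (hG : G.AtMostOneShortPath)
    (hσ : ValidStrategy G σ u) (huv : G.FarApart u v) (k : ℕ) :
    ((n : ℝ≥0∞) / ((n : ℝ≥0∞) + 1)) ^ k ≤ farProb G σ u v k := by
  induction k with
  | zero => rw [pow_zero, farProb_zero huv]
  | succ k ih =>
    rw [pow_succ']
    exact (mul_le_mul_right ih _).trans (div_succ_mul_farProb_le_farProb_succ hreg hG hσ k)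

end Regular

lemma ENNReal.tsum_pow_natCast_div_succ (n : ℕ) :
    ∑' k : ℕ, ((n : ℝ≥0∞) / ((n : ℝ≥0∞) + 1)) ^ k = n + 1 := by
  have hsub : 1 - (n : ℝ≥0∞) / ((n : ℝ≥0∞) + 1) = ((n : ℝ≥0∞) + 1)⁻¹ := by
    refine ENNReal.sub_eq_of_eq_add (by finiteness) ?_
    rw [div_eq_mul_inv, ← one_add_mul, add_comm 1,
      ENNReal.mul_inv_cancel (by positivity) (by finiteness)]
  rw [ENNReal.tsum_geometric, hsub, inv_inv]

theorem le_expCaptureTime_of_isRegularOfDegree {V : Type} [Fintype V] {G : SimpleGraph V}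
    {n : ℕ} (hreg : G.IsRegularOfDegree (n + 1)) (hG : G.AtMostOneShortPath)
    {σ : List V → V} {u v : V} (hσ : ValidStrategy G σ u) (huv : G.FarApart u v) :
    (n : ℝ≥0∞) + 1 ≤ expCaptureTime G σ u v :=
  calc (n : ℝ≥0∞) + 1 = ∑' k : ℕ, ((n : ℝ≥0∞) / ((n : ℝ≥0∞) + 1)) ^ k :=
        (ENNReal.tsum_pow_natCast_div_succ n).symm
    _ ≤ expCaptureTime G σ u v := ENNReal.tsum_le_tsum fun k =>
        (pow_le_farProb hreg hG hσ huv k).trans (farProb_le_survival hσ k)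

section ProjectivePlane

variable {P L : Type} {incid : P → L → Prop}

@[simp]
lemma incidenceGraph_adj_inl_inr {p : P} {l : L} :
    (incidenceGraph incid).Adj (Sum.inl p) (Sum.inr l) ↔ incid p l := by
  simp [incidenceGraph]

@[simp]
lemma incidenceGraph_adj_inr_inl {p : P} {l : L} :
    (incidenceGraph incid).Adj (Sum.inr l) (Sum.inl p) ↔ incid p l := by
  simp [incidenceGraph]

@[simp]
lemma incidenceGraph_not_adj_inl_inl {p q : P} :
    ¬ (incidenceGraph incid).Adj (Sum.inl p) (Sum.inl q) := by
  simp [incidenceGraph]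

@[simp]
lemma incidenceGraph_not_adj_inr_inr {l m : L} :
    ¬ (incidenceGraph incid).Adj (Sum.inr l) (Sum.inr m) := by
  simp [incidenceGraph]

lemma incidenceGraph_neighborSet_inl (p : P) :
    (incidenceGraph incid).neighborSet (Sum.inl p) = Sum.inr '' {l | incid p l} := by
  ext (q | l) <;> simp

lemma incidenceGraph_neighborSet_inr (l : L) :
    (incidenceGraph incid).neighborSet (Sum.inr l) = Sum.inl '' {p | incid p l} := by
  ext (p | m) <;> simp

lemma isRegularOfDegree_incidenceGraph [Fintype P] [Fintype L] {n : ℕ}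
    (hpp : IsProjectivePlaneOfOrder incid n) :
    (incidenceGraph incid).IsRegularOfDegree (n + 1) := by
  intro x
  rw [← SimpleGraph.card_neighborSet_eq_degree, ← Nat.card_eq_fintype_card]
  rcases x with p | l
  · rw [incidenceGraph_neighborSet_inl, Nat.card_image_of_injective Sum.inr_injective]
    exact hpp.card_lines_through_point p
  · rw [incidenceGraph_neighborSet_inr, Nat.card_image_of_injective Sum.inl_injective]
    exact hpp.card_points_on_line l

lemma atMostOneShortPath_incidenceGraph {n : ℕ} (hpp : IsProjectivePlaneOfOrder incid n) :
    (incidenceGraph incid).AtMostOneShortPath := by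
  rintro (q | m) (p | l) hab (p₁ | l₁) ⟨h₁, h₁'⟩ (p₂ | l₂) ⟨h₂, h₂'⟩ <;> simp_all
  · exact (hpp.exists_unique_line p q (Ne.symm hab)).unique ⟨h₁, h₁'⟩ ⟨h₂, h₂'⟩
  · exact (hpp.exists_unique_point l m (Ne.symm hab)).unique ⟨h₁, h₁'⟩ ⟨h₂, h₂'⟩

end ProjectivePlane

theorem projectivePlane_expected_capture_time_ge_general {P L : Type} [Fintype P] [Fintype L]
    (incid : P → L → Prop) (n : ℕ) (hpp : IsProjectivePlaneOfOrder incid n)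
    (u v : P ⊕ L) (huv : 2 ≤ (incidenceGraph incid).dist u v)
    (σ : List (P ⊕ L) → (P ⊕ L)) (hσ : ValidStrategy (incidenceGraph incid) σ u) :
    ((n : ℝ≥0∞) + 1) ≤ expCaptureTime (incidenceGraph incid) σ u v :=
  le_expCaptureTime_of_isRegularOfDegree (isRegularOfDegree_incidenceGraph hpp)
    (atMostOneShortPath_incidenceGraph hpp) hσ (SimpleGraph.farApart_of_two_le_dist huv)

/-- On the incidence graph of a projective plane of order `n ≥ 2`, if the cop and the drunk
robber start at distance at least `2`, then **every** valid cop strategy has expected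
capture time at least `n + 1` (the degree of regularity of the graph).  Since this graph
has diameter `3`, no function of the diameter alone can bound the expected capture time. -/
theorem projectivePlane_expected_capture_time_ge {P L : Type} [Fintype P] [Fintype L]
    (incid : P → L → Prop) (n : ℕ) (hn : 2 ≤ n) (hpp : IsProjectivePlaneOfOrder incid n)
    (u v : P ⊕ L) (huv : 2 ≤ (incidenceGraph incid).dist u v)
    (σ : List (P ⊕ L) → (P ⊕ L)) (hσ : ValidStrategy (incidenceGraph incid) σ u) :
    ((n : ℝ≥0∞) + 1) ≤ expCaptureTime (incidenceGraph incid) σ u v :=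
  projectivePlane_expected_capture_time_ge_general incid n hpp u v huv σ hσ
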